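/- arXiv:1712.07150 — 2 statements merged into one kernel-verified Lean document; each statement's English description precedes it below -/
import Mathlib

section
/- Let f : ℝ → ℝ be a monotone (increasing) function. Then there exist sequences of continuous functions g_n and h_n such that: (1) each g_n and h_n is increasing and g_n(x) ≤ f(x) ≤ h_n(x) for all x; (2) for each fixed x, the sequence g_n(x) is increasing in n and h_n(x) is decreasing in n; (3) g_n(x) → f(x) and h_n(x) → f(x) at every point x where f is continuous. -/
/-!
Squash `f` by `arctan` so that it becomes bounded, and regularize it by the Pasch–Hausdorff
envelopes `x ↦ inf_y (arctan (f y) + K |x - y|)`: they are `K`-Lipschitz, increasing in `x` and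
in `K`, lie below `arctan ∘ f`, and converge to it at every continuity point as `K → ∞`. Since
`f` is increasing, the envelopes stay strictly above `-π/2`, so composing with `tan` gives the
approximations from below; those from above come from the reflection `x ↦ -f (-x)`.
-/

open Filter Topology Set NNReal

noncomputable section

section LipschitzEnvelope

variable {α : Type*} [PseudoMetricSpace α] {φ : α → ℝ} {K : ℝ≥0} {x : α}

def lipschitzEnvelope (φ : α → ℝ) (K : ℝ≥0) (x : α) : ℝ :=
  ⨅ y, φ y + K * dist x y

lemma bddBelow_range_add_mul_dist (hφ : BddBelow (range φ)) (K : ℝ≥0) (x : α) :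
    BddBelow (range fun y => φ y + K * dist x y) := by
  obtain ⟨m, hm⟩ := hφ
  refine ⟨m, ?_⟩
  rintro _ ⟨y, rfl⟩
  have := hm (mem_range_self y)
  have : 0 ≤ (K : ℝ) * dist x y := by positivity
  linarith

lemma lipschitzEnvelope_le_add_mul_dist (hφ : BddBelow (range φ)) (y : α) :
    lipschitzEnvelope φ K x ≤ φ y + K * dist x y :=
  ciInf_le (bddBelow_range_add_mul_dist hφ K x) y

lemma lipschitzEnvelope_le (hφ : BddBelow (range φ)) : lipschitzEnvelope φ K x ≤ φ x := by
  simpa using lipschitzEnvelope_le_add_mul_dist (K := K) (x := x) hφ x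

lemma lipschitzWith_lipschitzEnvelope [Nonempty α] (hφ : BddBelow (range φ)) (K : ℝ≥0) :
    LipschitzWith K (lipschitzEnvelope φ K) := by
  refine LipschitzWith.of_le_add_mul K fun x x' => ?_
  rw [← sub_le_iff_le_add]
  refine le_ciInf fun y => ?_
  have h := lipschitzEnvelope_le_add_mul_dist (K := K) (x := x) hφ y
  have : (K : ℝ) * dist x y ≤ K * dist x' y + K * dist x x' := by
    rw [← mul_add]
    gcongr
    linarith [dist_triangle x x' y]
  linarith

lemma monotone_lipschitzEnvelope [Nonempty α] (hφ : BddBelow (range φ)) (x : α) :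
    Monotone fun K => lipschitzEnvelope φ K x := fun K L hKL =>
  le_ciInf fun y => (lipschitzEnvelope_le_add_mul_dist hφ y).trans <| by gcongr

/-- Near `x` the lower bound `b` of `φ` applies; away from `x` the penalty `K δ` does. -/
lemma min_le_lipschitzEnvelope [Nonempty α] {m b δ : ℝ} (hm : ∀ y, m ≤ φ y)
    (hb : ∀ y, dist x y < δ → b ≤ φ y) :
    min b (m + K * δ) ≤ lipschitzEnvelope φ K x := by
  refine le_ciInf fun y => ?_
  rcases lt_or_ge (dist x y) δ with hy | hy
  · have : 0 ≤ (K : ℝ) * dist x y := by positivity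
    exact (min_le_left _ _).trans (by linarith [hb y hy])
  · have : (K : ℝ) * δ ≤ K * dist x y := by gcongr
    exact (min_le_right _ _).trans (by linarith [hm y])

lemma tendsto_lipschitzEnvelope [Nonempty α] (hφ : BddBelow (range φ))
    (hx : LowerSemicontinuousAt φ x) :
    Tendsto (fun K => lipschitzEnvelope φ K x) atTop (𝓝 (φ x)) := by
  obtain ⟨m, hm⟩ := hφ
  refine tendsto_order.2 ⟨fun a ha => ?_, fun b hb => ?_⟩
  · obtain ⟨b, hab, hb⟩ := exists_between ha
    obtain ⟨δ, hδ, hδb⟩ := Metric.eventually_nhds_iff.1 (hx b hb)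
    have hpenalty : Tendsto (fun K : ℝ≥0 => m + K * δ) atTop atTop :=
      tendsto_atTop_add_const_left _ _
        (NNReal.tendsto_coe_atTop.2 tendsto_id |>.atTop_mul_const hδ)
    filter_upwards [hpenalty.eventually_gt_atTop a] with K hK
    refine lt_of_lt_of_le (lt_min hab hK) (min_le_lipschitzEnvelope (fun y => hm ⟨y, rfl⟩) ?_)
    exact fun y hy => (hδb (by rwa [dist_comm])).le
  · exact Eventually.of_forall fun K => (lipschitzEnvelope_le ⟨m, hm⟩).trans_lt hb

end LipschitzEnvelope

lemma Monotone.lipschitzEnvelope {φ : ℝ → ℝ} (hφ : Monotone φ) (hφb : BddBelow (range φ))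
    (K : ℝ≥0) : Monotone (lipschitzEnvelope φ K) := by
  intro x x' hxx'
  refine le_ciInf fun y => ?_
  rcases le_or_gt y x with hy | hy
  · refine (lipschitzEnvelope_le_add_mul_dist hφb y).trans ?_
    gcongr
    rw [Real.dist_eq, Real.dist_eq, abs_of_nonneg (by linarith), abs_of_nonneg (by linarith)]
    linarith
  · have : 0 ≤ (K : ℝ) * dist x' y := by positivity
    linarith [lipschitzEnvelope_le (K := K) (x := x) hφb, hφ hy.le]

section MonotoneApprox

variable {f : ℝ → ℝ}

lemma bddBelow_range_arctan_comp (f : ℝ → ℝ) : BddBelow (range (Real.arctan ∘ f)) :=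
  ⟨-(Real.pi / 2), by rintro _ ⟨y, rfl⟩; exact (Real.arctan_mem_Ioo _).1.le⟩

lemma lipschitzEnvelope_arctan_comp_mem_Ioo (hf : Monotone f) {K : ℝ≥0} (hK : 0 < K) (x : ℝ) :
    lipschitzEnvelope (Real.arctan ∘ f) K x ∈ Ioo (-(Real.pi / 2)) (Real.pi / 2) := by
  refine ⟨?_, (lipschitzEnvelope_le (bddBelow_range_arctan_comp f)).trans_lt
    (Real.arctan_lt_pi_div_two _)⟩
  have hfar : -(Real.pi / 2) < -(Real.pi / 2) + K * 1 := by simpa using hK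
  refine lt_of_lt_of_le (lt_min (Real.arctan_mem_Ioo (f (x - 1))).1 hfar)
    (min_le_lipschitzEnvelope (fun y => (Real.arctan_mem_Ioo _).1.le) fun y hy => ?_)
  rw [Real.dist_eq, abs_lt] at hy
  exact Real.arctan_strictMono.monotone (hf (by linarith))

def lowerApprox (f : ℝ → ℝ) (n : ℕ) (x : ℝ) : ℝ :=
  Real.tan (lipschitzEnvelope (Real.arctan ∘ f) (n + 1) x)

lemma continuous_lowerApprox (hf : Monotone f) (n : ℕ) : Continuous (lowerApprox f n) :=
  Real.continuousOn_tan_Ioo.comp_continuous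
    (lipschitzWith_lipschitzEnvelope (bddBelow_range_arctan_comp f) _).continuous
    (lipschitzEnvelope_arctan_comp_mem_Ioo hf n.cast_add_one_pos)

lemma monotone_lowerApprox (hf : Monotone f) (n : ℕ) : Monotone (lowerApprox f n) :=
  fun x x' hxx' => Real.strictMonoOn_tan.monotoneOn
    (lipschitzEnvelope_arctan_comp_mem_Ioo hf n.cast_add_one_pos x)
    (lipschitzEnvelope_arctan_comp_mem_Ioo hf n.cast_add_one_pos x')
    ((Real.arctan_strictMono.monotone.comp hf).lipschitzEnvelope
      (bddBelow_range_arctan_comp f) _ hxx')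

lemma lowerApprox_le (hf : Monotone f) (n : ℕ) (x : ℝ) : lowerApprox f n x ≤ f x := by
  have := Real.strictMonoOn_tan.monotoneOn
    (lipschitzEnvelope_arctan_comp_mem_Ioo hf n.cast_add_one_pos x) (Real.arctan_mem_Ioo (f x))
    (lipschitzEnvelope_le (bddBelow_range_arctan_comp f))
  rwa [Real.tan_arctan] at this

lemma monotone_lowerApprox_index (hf : Monotone f) (x : ℝ) :
    Monotone fun n => lowerApprox f n x := fun m n hmn =>
  Real.strictMonoOn_tan.monotoneOn
    (lipschitzEnvelope_arctan_comp_mem_Ioo hf m.cast_add_one_pos x)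
    (lipschitzEnvelope_arctan_comp_mem_Ioo hf n.cast_add_one_pos x)
    (monotone_lipschitzEnvelope (bddBelow_range_arctan_comp f) x
      (add_le_add_left (Nat.mono_cast hmn) 1))

lemma tendsto_lowerApprox (x : ℝ) (hx : ContinuousAt f x) :
    Tendsto (fun n => lowerApprox f n x) atTop (𝓝 (f x)) := by
  have henv : Tendsto (fun n : ℕ => lipschitzEnvelope (Real.arctan ∘ f) (n + 1) x) atTop
      (𝓝 (Real.arctan (f x))) :=
    (tendsto_lipschitzEnvelope (bddBelow_range_arctan_comp f)
      (Real.continuous_arctan.continuousAt.comp hx).lowerSemicontinuousAt).comp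
      (tendsto_atTop_mono (fun _ => le_self_add) tendsto_natCast_atTop_atTop)
  have htan : ContinuousAt Real.tan (Real.arctan (f x)) :=
    Real.continuousOn_tan_Ioo.continuousAt (isOpen_Ioo.mem_nhds (Real.arctan_mem_Ioo _))
  simpa [lowerApprox, Function.comp_def, Real.tan_arctan] using htan.tendsto.comp henv

def upperApprox (f : ℝ → ℝ) (n : ℕ) (x : ℝ) : ℝ :=
  -lowerApprox (fun y => -f (-y)) n (-x)

lemma Monotone.neg_comp_neg (hf : Monotone f) : Monotone fun y => -f (-y) :=
  (hf.comp_antitone fun _ _ => neg_le_neg).neg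

lemma continuous_upperApprox (hf : Monotone f) (n : ℕ) : Continuous (upperApprox f n) :=
  ((continuous_lowerApprox hf.neg_comp_neg n).comp continuous_neg).neg

lemma monotone_upperApprox (hf : Monotone f) (n : ℕ) : Monotone (upperApprox f n) :=
  ((monotone_lowerApprox hf.neg_comp_neg n).comp_antitone fun _ _ => neg_le_neg).neg

lemma le_upperApprox (hf : Monotone f) (n : ℕ) (x : ℝ) : f x ≤ upperApprox f n x := by
  have := lowerApprox_le hf.neg_comp_neg n (-x)
  rw [neg_neg] at this
  exact le_neg_of_le_neg this

lemma antitone_upperApprox_index (hf : Monotone f) (x : ℝ) :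
    Antitone fun n => upperApprox f n x :=
  (monotone_lowerApprox_index hf.neg_comp_neg (-x)).neg

lemma tendsto_upperApprox (x : ℝ) (hx : ContinuousAt f x) :
    Tendsto (fun n => upperApprox f n x) atTop (𝓝 (f x)) := by
  have hreflect : ContinuousAt (fun y => -f (-y)) (-x) :=
    ((neg_neg x).symm ▸ hx).comp continuous_neg.continuousAt |>.neg
  simpa [upperApprox] using (tendsto_lowerApprox (-x) hreflect).neg

end MonotoneApprox

end

/-- Monotone approximation of an increasing function by continuous increasing
functions from below (`g`) and above (`h`), monotone in `n`, converging at
continuity points. -/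
theorem monotone_approx_continuous (f : ℝ → ℝ) (hf : Monotone f) :
    ∃ g h : ℕ → ℝ → ℝ,
      (∀ n, Continuous (g n) ∧ Continuous (h n)) ∧
      (∀ n, Monotone (g n) ∧ Monotone (h n)) ∧
      (∀ n x, g n x ≤ f x ∧ f x ≤ h n x) ∧
      (∀ x, Monotone fun n => g n x) ∧
      (∀ x, Antitone fun n => h n x) ∧
      (∀ x, ContinuousAt f x →
        Tendsto (fun n => g n x) atTop (𝓝 (f x)) ∧
        Tendsto (fun n => h n x) atTop (𝓝 (f x))) :=
  ⟨lowerApprox f, upperApprox f,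
    fun n => ⟨continuous_lowerApprox hf n, continuous_upperApprox hf n⟩,
    fun n => ⟨monotone_lowerApprox hf n, monotone_upperApprox hf n⟩,
    fun n x => ⟨lowerApprox_le hf n x, le_upperApprox hf n x⟩,
    monotone_lowerApprox_index hf, antitone_upperApprox_index hf,
    fun x hx => ⟨tendsto_lowerApprox x hx, tendsto_upperApprox x hx⟩⟩
end

section
/- Let Ω ⊆ ℝ² be a bounded convex open set with finitely many flat boundary parts. Then there exists a sequence of strictly convex bounded open sets Ω_n ⊇ Ω such that the closures of Ω_n converge to the closure of Ω in the Hausdorff metric. -/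
/-!
Let `K` be the closure of `Ω`, a compact convex set, and fix `ε > 0`. The level set
`S = {x | infDist x K = ε}` is compact and disjoint from `K`. By Hahn–Banach every point of `S`
is separated from `K` by a closed ball containing `K` (a far-away ball whose boundary is close to
the separating hyperplane), so finitely many such balls already exclude all of `S`. Their
intersection `C` is strictly convex and contains `K`; being connected and missing the level set,
it stays within distance `ε` of `K`. The interiors of these sets, for `ε = 1/(n+1)`, are the
required approximations.
-/

open Filter Topology Metric Set

noncomputable section

abbrev Plane := EuclideanSpace ℝ (Fin 2)

/-- `FlatPart Ω p q` : the segment `[p,q]` is a flat part of `∂Ω`, i.e. a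
maximal nondegenerate line segment contained in `∂Ω`. -/
def FlatPart (Ω : Set Plane) (p q : Plane) : Prop :=
  p ≠ q ∧ segment ℝ p q ⊆ frontier Ω ∧
  ∀ p' q' : Plane, segment ℝ p q ⊆ segment ℝ p' q' →
    segment ℝ p' q' ⊆ frontier Ω → segment ℝ p' q' = segment ℝ p q

theorem Finset.strictConvex_biInter {𝕜 E ι : Type*} [Semiring 𝕜] [PartialOrder 𝕜]
    [TopologicalSpace E] [AddCommMonoid E] [SMul 𝕜 E] (t : Finset ι) {s : ι → Set E}
    (hs : ∀ i ∈ t, StrictConvex 𝕜 (s i)) : StrictConvex 𝕜 (⋂ i ∈ t, s i) := by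
  intro x hx y hy hxy a b ha hb hab
  rw [Finset.interior_iInter, mem_iInter₂]
  exact fun i hi => hs i hi (mem_iInter₂.1 hx i hi) (mem_iInter₂.1 hy i hi) hxy ha hb hab

theorem IsPreconnected.infDist_le_of_forall_ne {X : Type*} [PseudoMetricSpace X] {C K : Set X}
    {ε : ℝ} (hC : IsPreconnected C) (hKC : K ⊆ C) (hK : K.Nonempty) (hε : 0 ≤ ε)
    (hne : ∀ y ∈ C, infDist y K ≠ ε) {y : X} (hy : y ∈ C) : infDist y K ≤ ε := by
  obtain ⟨p, hp⟩ := hK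
  by_contra! hlt
  have hε_mem : ε ∈ Icc (infDist p K) (infDist y K) := by
    rw [infDist_zero_of_mem hp]
    exact ⟨hε, hlt.le⟩
  obtain ⟨z, hzC, hz⟩ :=
    hC.intermediate_value (hKC hp) hy (continuous_infDist_pt K).continuousOn hε_mem
  exact hne z hzC hz

section InnerProductSpace

variable {E : Type*} [NormedAddCommGroup E] [InnerProductSpace ℝ E]

open RealInnerProductSpace in
theorem exists_closedBall_superset_notMem [CompleteSpace E] {K : Set E} (hKc : IsClosed K)
    (hKb : Bornology.IsBounded K) (hKconv : Convex ℝ K) (hKne : K.Nonempty) {x : E}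
    (hx : x ∉ K) :
    ∃ c r, K ⊆ closedBall c r ∧ x ∉ closedBall c r := by
  obtain ⟨f, u, hfK, hfx⟩ := geometric_hahn_banach_closed_point hKconv hKc hx
  set v : E := (InnerProductSpace.toDual ℝ E).symm f
  have hv : ∀ y, ⟪v, y⟫ = f y := fun y => InnerProductSpace.toDual_symm_apply
  obtain ⟨D, hD⟩ := (isBounded_iff_subset_closedBall x).1 hKb
  set δ := f x - u
  have hδ : 0 < δ := sub_pos.2 hfx
  -- With the center far behind the hyperplane `f = u`, every `y ∈ K` has
  -- `‖y - c‖² ≤ ‖x - c‖² - t δ` as soon as `t δ ≥ D²`.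
  set t := (D ^ 2 + 1) / δ
  have ht : 0 < t := by positivity
  have htδ : t * δ = D ^ 2 + 1 := div_mul_cancel₀ _ hδ.ne'
  set c := x - t • v
  set Q := t ^ 2 * ‖v‖ ^ 2 - t * δ
  have hnorm_sq :
      ∀ y, ‖y - c‖ ^ 2 = ‖y - x‖ ^ 2 + 2 * t * (f y - f x) + t ^ 2 * ‖v‖ ^ 2 := by
    intro y
    rw [show y - c = (y - x) + t • v by simp only [c]; abel, norm_add_sq_real, norm_smul,
      real_inner_smul_right, real_inner_comm, inner_sub_right, hv, hv, Real.norm_of_nonneg ht.le]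
    ring
  have hK_sq : ∀ y ∈ K, ‖y - c‖ ^ 2 ≤ Q := by
    intro y hy
    have hyx : ‖y - x‖ ≤ D := mem_closedBall_iff_norm.1 (hD hy)
    have hyx_sq : ‖y - x‖ ^ 2 ≤ D ^ 2 := pow_le_pow_left₀ (norm_nonneg _) hyx 2
    have hfy : t * (f y - f x) < t * -δ := mul_lt_mul_of_pos_left (by linarith [hfK y hy]) ht
    rw [hnorm_sq]
    linarith
  obtain ⟨p, hp⟩ := hKne
  have hQ : 0 ≤ Q := (sq_nonneg _).trans (hK_sq p hp)
  refine ⟨c, √Q, fun y hy => ?_, fun hxc => ?_⟩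
  · rw [mem_closedBall_iff_norm]
    exact Real.le_sqrt_of_sq_le (hK_sq y hy)
  · have hx_sq : Q < ‖x - c‖ ^ 2 := by
      rw [hnorm_sq, sub_self, norm_zero]
      linarith [mul_pos ht hδ]
    rw [mem_closedBall_iff_norm, ← Real.sqrt_sq (norm_nonneg (x - c))] at hxc
    exact (Real.sqrt_lt_sqrt hQ hx_sq).not_ge hxc

theorem exists_strictConvex_superset_disjoint [CompleteSpace E] {K S : Set E}
    (hKc : IsClosed K) (hKb : Bornology.IsBounded K) (hKconv : Convex ℝ K) (hKne : K.Nonempty)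
    (hS : IsCompact S) (hKS : Disjoint K S) :
    ∃ C, IsClosed C ∧ Bornology.IsBounded C ∧ StrictConvex ℝ C ∧ K ⊆ C ∧
      Disjoint C S := by
  have hsep : ∀ x : S, ∃ c r, K ⊆ closedBall c r ∧ (x : E) ∉ closedBall c r := fun x =>
    exists_closedBall_superset_notMem hKc hKb hKconv hKne (hKS.notMem_of_mem_right x.2)
  choose c r hKB hxB using hsep
  obtain ⟨t, ht⟩ := hS.elim_finite_subcover (fun i => (closedBall (c i) (r i))ᶜ)
    (fun _ => isClosed_closedBall.isOpen_compl)
    fun x hx => mem_iUnion.2 ⟨⟨x, hx⟩, hxB ⟨x, hx⟩⟩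
  obtain ⟨R, hR⟩ := (isBounded_iff_subset_closedBall 0).1 hKb
  refine ⟨closedBall 0 R ∩ ⋂ i ∈ t, closedBall (c i) (r i),
    isClosed_closedBall.inter (isClosed_biInter fun _ _ => isClosed_closedBall),
    isBounded_closedBall.subset inter_subset_left,
    (strictConvex_closedBall ℝ 0 R).inter
      (t.strictConvex_biInter fun _ _ => strictConvex_closedBall ℝ _ _),
    fun y hy => ⟨hR hy, mem_iInter₂.2 fun i _ => hKB i hy⟩, ?_⟩
  rw [Set.disjoint_right]
  intro x hx hxC
  obtain ⟨i, hi, hxi⟩ := mem_iUnion₂.1 (ht hx)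
  exact hxi (mem_iInter₂.1 hxC.2 i hi)

theorem exists_strictConvex_superset_hausdorffDist_le [ProperSpace E] {K : Set E}
    (hK : IsCompact K) (hKconv : Convex ℝ K) (hKne : K.Nonempty) {ε : ℝ} (hε : 0 < ε) :
    ∃ C, IsClosed C ∧ Bornology.IsBounded C ∧ StrictConvex ℝ C ∧ K ⊆ C ∧
      hausdorffDist C K ≤ ε := by
  set S := {x | infDist x K = ε}
  have hS : IsCompact S := by
    refine isCompact_of_isClosed_isBounded
      (isClosed_eq (continuous_infDist_pt K) continuous_const)
      (hK.isBounded.thickening (δ := ε + 1) |>.subset fun x hx => ?_)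
    rw [mem_thickening_iff_infDist_lt hKne, show infDist x K = ε from hx]
    linarith
  have hKS : Disjoint K S :=
    Set.disjoint_left.2 fun x hx hxS => hε.ne (infDist_zero_of_mem hx ▸ hxS)
  obtain ⟨C, hCc, hCb, hCs, hKC, hCS⟩ :=
    exists_strictConvex_superset_disjoint hK.isClosed hK.isBounded hKconv hKne hS hKS
  refine ⟨C, hCc, hCb, hCs, hKC, hausdorffDist_le_of_infDist hε.le (fun y hy => ?_)
    fun y hy => by rw [infDist_zero_of_mem (hKC hy)]; exact hε.le⟩
  exact hCs.convex.isPreconnected.infDist_le_of_forall_ne hKC hKne hε.le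
    (fun z hz hzS => Set.disjoint_left.1 hCS hz hzS) hy

end InnerProductSpace

theorem approx_by_strictly_convex_general
    (Ω : Set Plane) (hΩo : IsOpen Ω) (hΩb : Bornology.IsBounded Ω)
    (hΩc : Convex ℝ Ω) (hΩne : Ω.Nonempty) :
    ∃ Ω' : ℕ → Set Plane,
      (∀ n, IsOpen (Ω' n) ∧ Bornology.IsBounded (Ω' n) ∧
        StrictConvex ℝ (closure (Ω' n)) ∧ Ω ⊆ Ω' n) ∧
      Tendsto (fun n => hausdorffDist (closure (Ω' n)) (closure Ω))
        atTop (𝓝 0) := by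
  choose C hCc hCb hCs hΩC hCd using fun n : ℕ =>
    exists_strictConvex_superset_hausdorffDist_le hΩb.isCompact_closure hΩc.closure
      hΩne.closure (Nat.one_div_pos_of_nat (n := n))
  have hΩint : ∀ n, Ω ⊆ interior (C n) := fun n =>
    interior_maximal (subset_closure.trans (hΩC n)) hΩo
  have hcl : ∀ n, closure (interior (C n)) = C n := fun n => by
    rw [(hCs n).convex.closure_interior_eq_closure_of_nonempty_interior (hΩne.mono (hΩint n)),
      (hCc n).closure_eq]
  refine ⟨fun n => interior (C n), fun n => ⟨isOpen_interior,
    (hCb n).subset interior_subset, (hcl n).symm ▸ hCs n, hΩint n⟩, ?_⟩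
  simp only [hcl]
  exact squeeze_zero (fun _ => hausdorffDist_nonneg) hCd tendsto_one_div_add_atTop_nhds_zero_nat

/-- A bounded convex open planar set with finitely many flat boundary parts can
be approximated from outside, in the Hausdorff metric, by strictly convex
bounded open sets. -/
theorem approx_by_strictly_convex
    (Ω : Set Plane) (hΩo : IsOpen Ω) (hΩb : Bornology.IsBounded Ω)
    (hΩc : Convex ℝ Ω) (hΩne : Ω.Nonempty)
    (hfin : {s : Set Plane | ∃ p q, FlatPart Ω p q ∧ s = segment ℝ p q}.Finite) :
    ∃ Ω' : ℕ → Set Plane,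
      (∀ n, IsOpen (Ω' n) ∧ Bornology.IsBounded (Ω' n) ∧
        StrictConvex ℝ (closure (Ω' n)) ∧ Ω ⊆ Ω' n) ∧
      Tendsto (fun n => hausdorffDist (closure (Ω' n)) (closure Ω))
        atTop (𝓝 0) :=
  approx_by_strictly_convex_general Ω hΩo hΩb hΩc hΩne
end
end
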